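/- Let J be a Jacobi operator with M₀ := sup_k |α_k| and M₁ := sup_k |β_k| finite, and set M = 3(M₀ + M₁). For each m ≥ 1 let J^{[m]} be the Toeplitz-plus-finite-rank truncation of J. Suppose μ is a spectral measure of J and, for each m, μ^{[m]} is a spectral measure of J^{[m]}, all with support contained in [−M, M]. Then for every bounded continuous function f : ℝ → ℝ, ∫ f dμ^{[m]} → ∫ f dμ as m → ∞. -/
import Mathlib


open Polynomial MeasureTheory Filter Topology

noncomputable section

/-- Orthonormal polynomials of the Jacobi operator with diagonal `a` and off-diagonal `b`:
`P 0 = 1`, `P 1 = (X - a 0)/b 0`, and `X * P k = b (k-1) * P (k-1) + a k * P k + b k * P (k+1)`. -/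
def orthPoly (a b : ℕ → ℝ) : ℕ → Polynomial ℝ
  | 0 => 1
  | 1 => Polynomial.C (b 0)⁻¹ * (Polynomial.X - Polynomial.C (a 0))
  | (k+2) => Polynomial.C (b (k+1))⁻¹ *
      ((Polynomial.X - Polynomial.C (a (k+1))) * orthPoly a b (k+1)
        - Polynomial.C (b k) * orthPoly a b k)

lemma orthPoly_congr (a a' b b' : ℕ → ℝ) :
    ∀ n, (∀ i < n, a i = a' i) → (∀ i < n, b i = b' i) →
      orthPoly a b n = orthPoly a' b' n := by
  intro n
  induction n using Nat.strong_induction_on with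
  | _ n ih =>
    match n with
    | 0 => intro _ _; rfl
    | 1 =>
      intro ha hb
      simp only [orthPoly, ha 0 one_pos, hb 0 one_pos]
    | (k+2) =>
      intro ha hb
      have h1 : orthPoly a b (k+1) = orthPoly a' b' (k+1) :=
        ih (k+1) (by omega) (fun i hi => ha i (by omega)) (fun i hi => hb i (by omega))
      have h0 : orthPoly a b k = orthPoly a' b' k :=
        ih k (by omega) (fun i hi => ha i (by omega)) (fun i hi => hb i (by omega))
      simp only [orthPoly, h1, h0, ha (k+1) (by omega), hb (k+1) (by omega),
        hb k (by omega)]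

lemma orthPoly_natDegree_le (a b : ℕ → ℝ) : ∀ n, (orthPoly a b n).natDegree ≤ n := by
  intro n
  induction n using Nat.strong_induction_on with
  | _ n ih =>
    match n with
    | 0 => simp [orthPoly]
    | 1 =>
      refine le_trans (natDegree_C_mul_le _ _) ?_
      simp [natDegree_X_sub_C]
    | (k+2) =>
      refine le_trans (natDegree_C_mul_le _ _) (le_trans (natDegree_sub_le _ _) ?_)
      have h1 : ((X - C (a (k+1))) * orthPoly a b (k+1)).natDegree ≤ k + 2 := by
        refine le_trans (natDegree_mul_le) ?_
        have := ih (k+1) (by omega)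
        rw [natDegree_X_sub_C]
        omega
      have h0 : (C (b k) * orthPoly a b k).natDegree ≤ k + 2 := by
        refine le_trans (natDegree_C_mul_le _ _) ?_
        have := ih k (by omega); omega
      exact max_le h1 h0

lemma orthPoly_coeff (a b : ℕ → ℝ) :
    ∀ n, (orthPoly a b n).coeff n = (∏ i ∈ Finset.range n, b i)⁻¹ := by
  intro n
  induction n using Nat.strong_induction_on with
  | _ n ih =>
    match n with
    | 0 => simp [orthPoly]
    | 1 => simp [orthPoly, coeff_C_mul, coeff_X, Finset.prod_range_one]
    | (k+2) =>
      have hd1 : (orthPoly a b (k+1)).coeff (k+2) = 0 :=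
        coeff_eq_zero_of_natDegree_lt (by have := orthPoly_natDegree_le a b (k+1); omega)
      have hd0 : (orthPoly a b k).coeff (k+2) = 0 :=
        coeff_eq_zero_of_natDegree_lt (by have := orthPoly_natDegree_le a b k; omega)
      have hc1 : (orthPoly a b (k+1)).coeff (k+1) = (∏ i ∈ Finset.range (k+1), b i)⁻¹ :=
        ih (k+1) (by omega)
      show (C (b (k+1))⁻¹ *
        ((X - C (a (k+1))) * orthPoly a b (k+1)
          - C (b k) * orthPoly a b k)).coeff (k+2) = _
      rw [coeff_C_mul, coeff_sub, coeff_C_mul, hd0, sub_mul, coeff_sub, coeff_X_mul, hc1,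
        coeff_C_mul, hd1]
      simp only [Finset.prod_range_succ, mul_inv]
      ring

lemma orthPoly_natDegree (a b : ℕ → ℝ) (hb : ∀ k, b k ≠ 0) (n : ℕ) :
    (orthPoly a b n).natDegree = n := by
  have h1 : (orthPoly a b n).coeff n ≠ 0 := by
    rw [orthPoly_coeff]
    exact inv_ne_zero (Finset.prod_ne_zero_iff.mpr fun i _ => hb i)
  exact le_antisymm (orthPoly_natDegree_le a b n) (le_natDegree_of_ne_zero h1)

lemma orthPoly_ne_zero (a b : ℕ → ℝ) (hb : ∀ k, b k ≠ 0) (n : ℕ) :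
    orthPoly a b n ≠ 0 := by
  intro h
  have h1 : (orthPoly a b n).coeff n ≠ 0 := by
    rw [orthPoly_coeff]
    exact inv_ne_zero (Finset.prod_ne_zero_iff.mpr fun i _ => hb i)
  rw [h] at h1; simp at h1

lemma ae_mem_Icc_of_compl_null {M : ℝ} (μ : Measure ℝ)
    (hs : μ (Set.Icc (-M) M)ᶜ = 0) : ∀ᵐ x ∂μ, x ∈ Set.Icc (-M) M := by
  rw [ae_iff]
  exact hs

lemma integrable_of_supp {M : ℝ} (μ : Measure ℝ) [IsFiniteMeasure μ]
    (hs : μ (Set.Icc (-M) M)ᶜ = 0) {f : ℝ → ℝ} (hf : Continuous f) :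
    Integrable f μ := by
  obtain ⟨C, hC⟩ := (isCompact_Icc (a := -M) (b := M)).exists_bound_of_continuousOn
    hf.continuousOn
  refine (integrable_const C).mono' hf.aestronglyMeasurable ?_
  filter_upwards [ae_mem_Icc_of_compl_null μ hs] with x hx
  exact hC x hx

/-- Key lemma: two compactly supported probability measures in which the `P n` (`n ≥ 1`,
`n ≤ N`) integrate to zero give the same integrals of polynomials of degree `≤ N`,
provided `P n` has degree exactly `n`. -/
lemma poly_integral_eq (P : ℕ → Polynomial ℝ) (hdeg : ∀ n, (P n).natDegree = n)
    (hne : ∀ n, P n ≠ 0) (M : ℝ) (μ ν : Measure ℝ)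
    [IsProbabilityMeasure μ] [IsProbabilityMeasure ν]
    (hμs : μ (Set.Icc (-M) M)ᶜ = 0) (hνs : ν (Set.Icc (-M) M)ᶜ = 0)
    (N : ℕ)
    (hμo : ∀ n, 0 < n → n ≤ N → ∫ s, (P n).eval s ∂μ = 0)
    (hνo : ∀ n, 0 < n → n ≤ N → ∫ s, (P n).eval s ∂ν = 0) :
    ∀ q : Polynomial ℝ, q.natDegree ≤ N → ∫ s, q.eval s ∂μ = ∫ s, q.eval s ∂ν := by
  suffices H : ∀ n, ∀ q : Polynomial ℝ, q.natDegree ≤ N → q.natDegree ≤ n →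
      ∫ s, q.eval s ∂μ = ∫ s, q.eval s ∂ν from
    fun q hq => H q.natDegree q hq le_rfl
  intro n
  induction n using Nat.strong_induction_on with
  | _ n ih =>
    intro q hqN hqn
    by_cases hd0 : q.natDegree = 0
    · obtain ⟨c, rfl⟩ := natDegree_eq_zero.mp hd0
      simp
    · have hq : q ≠ 0 := fun h => hd0 (by simp [h])
      set d := q.natDegree with hdd
      have hd1 : 0 < d := Nat.pos_of_ne_zero hd0
      have hlc : (P d).leadingCoeff ≠ 0 := leadingCoeff_ne_zero.mpr (hne d)
      set c := q.leadingCoeff / (P d).leadingCoeff with hc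
      have hc0 : c ≠ 0 := div_ne_zero (leadingCoeff_ne_zero.mpr hq) hlc
      set r := q - C c * P d with hr
      have hdegP : (P d).degree = (d : WithBot ℕ) := by
        rw [degree_eq_natDegree (hne d), hdeg]
      have hdegq : q.degree = (d : WithBot ℕ) := degree_eq_natDegree hq
      have hdegCP : (C c * P d).degree = (d : WithBot ℕ) := by
        rw [degree_mul, degree_C hc0, hdegP, zero_add]
      have hlceq : q.leadingCoeff = (C c * P d).leadingCoeff := by
        rw [leadingCoeff_mul, leadingCoeff_C, hc]
        field_simp
      have hlt : r.degree < q.degree := degree_sub_lt (by rw [hdegq, hdegCP]) hq hlceq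
      have hrd : r.natDegree < d := by
        by_cases hr0 : r = 0
        · rw [hr0]; simpa using hd1
        · exact natDegree_lt_natDegree hr0 hlt
      have hsplit : ∀ s : ℝ, q.eval s = c * (P d).eval s + r.eval s := by
        intro s
        rw [hr]
        simp only [eval_sub, eval_mul, eval_C]
        ring
      have key : ∀ (κ : Measure ℝ) [IsProbabilityMeasure κ],
          κ (Set.Icc (-M) M)ᶜ = 0 → (∫ s, (P d).eval s ∂κ = 0) →
          ∫ s, q.eval s ∂κ = ∫ s, r.eval s ∂κ := by
        intro κ _ hκs hκo
        have h1 : Integrable (fun s => (P d).eval s) κ :=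
          integrable_of_supp κ hκs (P d).continuous
        have h2 : Integrable (fun s => r.eval s) κ :=
          integrable_of_supp κ hκs r.continuous
        calc ∫ s, q.eval s ∂κ = ∫ s, (c * (P d).eval s + r.eval s) ∂κ := by
              exact integral_congr_ae (Filter.Eventually.of_forall hsplit)
          _ = c * ∫ s, (P d).eval s ∂κ + ∫ s, r.eval s ∂κ := by
              rw [integral_add (h1.const_mul c) h2, integral_const_mul]
          _ = ∫ s, r.eval s ∂κ := by rw [hκo]; ring
      rw [key μ hμs (hμo d hd1 hqN), key ν hνs (hνo d hd1 hqN)]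
      exact ih r.natDegree (lt_of_lt_of_le hrd hqn) r
        (le_trans hrd.le hqN) le_rfl

/-- The spectral measures of the Toeplitz-plus-finite-rank truncations
`J^{[m]}` of a bounded Jacobi operator `J` converge weakly to the spectral measure of `J`:
`∫ f dμ^{[m]} → ∫ f dμ` for every bounded continuous `f`. -/
theorem stmt17 (α β : ℕ → ℝ) (hβ : ∀ k, 0 < β k)
    (M₀ M₁ : ℝ) (hM₀ : ∀ k, |α k| ≤ M₀) (hM₁ : ∀ k, |β k| ≤ M₁)
    (hM₀sup : ∀ M', (∀ k, |α k| ≤ M') → M₀ ≤ M')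
    (hM₁sup : ∀ M', (∀ k, |β k| ≤ M') → M₁ ≤ M')
    (μ : Measure ℝ) [IsProbabilityMeasure μ]
    (hμsupp : μ (Set.Icc (-(3*(M₀+M₁))) (3*(M₀+M₁)))ᶜ = 0)
    (hμorth : ∀ j k, ∫ s, (orthPoly α β j).eval s * (orthPoly α β k).eval s ∂μ
      = if j = k then 1 else 0)
    (μm : ℕ → Measure ℝ) (hμm : ∀ m, IsProbabilityMeasure (μm m))
    (hμmsupp : ∀ m, 1 ≤ m → (μm m) (Set.Icc (-(3*(M₀+M₁))) (3*(M₀+M₁)))ᶜ = 0)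
    (hμmorth : ∀ m, 1 ≤ m → ∀ j k,
      ∫ s, (orthPoly (fun i => if i < m then α i else 0)
              (fun i => if i < m - 1 then β i else 1/2) j).eval s
          * (orthPoly (fun i => if i < m then α i else 0)
              (fun i => if i < m - 1 then β i else 1/2) k).eval s ∂(μm m)
        = if j = k then 1 else 0) :
    ∀ f : ℝ → ℝ, Continuous f → (∃ B, ∀ x, |f x| ≤ B) →
      Tendsto (fun m => ∫ s, f s ∂(μm m)) atTop (𝓝 (∫ s, f s ∂μ)) := by
  intro f hf _hfB
  set M : ℝ := 3*(M₀+M₁) with hM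
  have hβne : ∀ k, β k ≠ 0 := fun k => (hβ k).ne'
  have hdeg : ∀ n, (orthPoly α β n).natDegree = n := orthPoly_natDegree α β hβne
  have hne : ∀ n, orthPoly α β n ≠ 0 := orthPoly_ne_zero α β hβne
  -- first-row orthogonality for μ
  have hμo : ∀ n, 0 < n → ∫ s, (orthPoly α β n).eval s ∂μ = 0 := by
    intro n hn
    have h := hμorth n 0
    have h0 : orthPoly α β 0 = 1 := rfl
    rw [h0] at h
    simpa [hn.ne'] using h
  -- first-row orthogonality for μm m, n < m
  have hμmo : ∀ m, 1 ≤ m → ∀ n, 0 < n → n < m →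
      ∫ s, (orthPoly α β n).eval s ∂(μm m) = 0 := by
    intro m hm n hn hnm
    have h := hμmorth m hm n 0
    have hcong : orthPoly (fun i => if i < m then α i else 0)
        (fun i => if i < m - 1 then β i else 1/2) n = orthPoly α β n := by
      refine orthPoly_congr _ _ _ _ n (fun i hi => ?_) (fun i hi => ?_)
      · rw [if_pos (by omega)]
      · rw [if_pos (by omega)]
    have h0 : orthPoly (fun i => if i < m then α i else 0)
        (fun i => if i < m - 1 then β i else 1/2) 0 = 1 := rfl
    rw [hcong, h0] at h
    simpa [hn.ne'] using h
  rw [Metric.tendsto_atTop]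
  intro ε hε
  obtain ⟨p, hp⟩ := exists_polynomial_near_of_continuousOn (-M) M f
    hf.continuousOn (ε/3) (by positivity)
  refine ⟨p.natDegree + 1, fun m hm => ?_⟩
  have hm1 : 1 ≤ m := le_trans (by omega) hm
  haveI := hμm m
  have hpq : ∫ s, p.eval s ∂(μm m) = ∫ s, p.eval s ∂μ := by
    refine poly_integral_eq (orthPoly α β) hdeg hne M (μm m) μ (hμmsupp m hm1) hμsupp
      p.natDegree (fun n hn hnN => hμmo m hm1 n hn (by omega))
      (fun n hn _ => hμo n hn) p le_rfl
  have hbound : ∀ (κ : Measure ℝ) [IsProbabilityMeasure κ],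
      κ (Set.Icc (-M) M)ᶜ = 0 → |(∫ s, f s ∂κ) - ∫ s, p.eval s ∂κ| ≤ ε/3 := by
    intro κ _ hκ
    have h1 : Integrable f κ := integrable_of_supp κ hκ hf
    have h2 : Integrable (fun s => p.eval s) κ := integrable_of_supp κ hκ p.continuous
    rw [← integral_sub h1 h2]
    have hb := norm_integral_le_of_norm_le_const (μ := κ)
      (f := fun s => f s - p.eval s) (C := ε/3) ?_
    · simpa using hb
    · filter_upwards [ae_mem_Icc_of_compl_null κ hκ] with x hx
      have := hp x hx
      rw [Real.norm_eq_abs, abs_sub_comm]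
      exact this.le
  have h1 := hbound (μm m) (hμmsupp m hm1)
  have h2 := hbound μ hμsupp
  rw [Real.dist_eq]
  have t1 := abs_sub_le (∫ s, f s ∂(μm m)) (∫ s, p.eval s ∂(μm m)) (∫ s, f s ∂μ)
  rw [hpq] at t1
  have t2 : |(∫ s, p.eval s ∂μ) - ∫ s, f s ∂μ| ≤ ε/3 := by
    rw [abs_sub_comm]; exact h2
  have h1' : |(∫ s, f s ∂(μm m)) - ∫ s, p.eval s ∂μ| ≤ ε/3 := by
    rw [← hpq]; exact h1
  linarith

end
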